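/- arXiv:2210.00162 — 2 statements merged into one kernel-verified Lean document; each statement's English description precedes it below -/
import Mathlib

section
/- Let V be a real inner product space, f : V → ℝ convex and differentiable, θ* ∈ V, and let g : ℕ → V with ‖g(t)‖ ≤ σ for all t. Suppose θ(t+1) = θ(t) - α • g(t) with α = d/(σ√T), σ > 0, d > 0, T ≥ 1, and ‖θ(t) - θ*‖ ≤ d for all t ∈ {0,…,T-1}. Then min_{0 ≤ t < T} (f(θ(t)) - f(θ*)) ≤ dσ/√T + (d/T) ∑_{t=0}^{T-1} ‖g(t) - ∇f(θ(t))‖. -/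
open RealInnerProductSpace

lemma grad_convex_ineq {V : Type*} [NormedAddCommGroup V] [InnerProductSpace ℝ V]
    [CompleteSpace V]
    (f : V → ℝ) (hconv : ConvexOn ℝ Set.univ f) (hdiff : Differentiable ℝ f)
    (x y : V) : ⟪gradient f x, y - x⟫ ≤ f y - f x := by
  set c : ℝ → V := fun s => s • (y - x) + x with hc
  have hcx : c 0 = x := by simp [hc]
  have hcy : c 1 = y := by simp [hc]
  have hcd : HasDerivAt c (y - x) 0 := by
    have : HasDerivAt (fun s : ℝ => s • (y - x) + x) ((1:ℝ) • (y - x)) 0 :=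
      ((hasDerivAt_id (0:ℝ)).smul_const (y - x)).add_const x
    simpa [hc] using this
  have hfd : HasFDerivAt f (InnerProductSpace.toDual ℝ V (gradient f x)) x :=
    ((hdiff x).hasGradientAt).hasFDerivAt
  have hfd' : HasFDerivAt f (InnerProductSpace.toDual ℝ V (gradient f x)) (c 0) := by
    rw [hcx]; exact hfd
  have hφ : HasDerivAt (f ∘ c) ⟪gradient f x, y - x⟫ 0 := by
    have := hfd'.comp_hasDerivAt 0 hcd
    simpa using this
  have hφconv : ConvexOn ℝ Set.univ (f ∘ c) := by
    have := hconv.comp_affineMap (AffineMap.lineMap x y)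
    have hceq : f ∘ c = f ∘ (AffineMap.lineMap x y) := by
      funext s; simp only [hc, Function.comp, AffineMap.lineMap_apply_module]
      congr 1
      module
    rw [hceq]
    simpa using this
  have := hφconv.le_slope_of_hasDerivAt (Set.mem_univ (0:ℝ)) (Set.mem_univ 1) one_pos hφ
  simpa [slope_def_field, hcx, hcy] using this

theorem stmt8 {V : Type*} [NormedAddCommGroup V] [InnerProductSpace ℝ V] [CompleteSpace V]
    (f : V → ℝ) (hconv : ConvexOn ℝ Set.univ f) (hdiff : Differentiable ℝ f)
    (θstar : V) (θ g : ℕ → V) (σ d α : ℝ) (T : ℕ)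
    (hσ : 0 < σ) (hd : 0 < d) (hT : 1 ≤ T)
    (hg : ∀ t, ‖g t‖ ≤ σ)
    (hα : α = d / (σ * Real.sqrt T))
    (hrec : ∀ t, θ (t + 1) = θ t - α • g t)
    (hbound : ∀ t < T, ‖θ t - θstar‖ ≤ d) :
    (Finset.range T).inf' (Finset.nonempty_range_iff.mpr (by omega))
        (fun t => f (θ t) - f θstar) ≤
      d * σ / Real.sqrt T +
        (d / T) * ∑ t ∈ Finset.range T, ‖g t - gradient f (θ t)‖ := by
  set s := Real.sqrt T with hsdef
  have hTpos : (0:ℝ) < T := by positivity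
  have hs : 0 < s := Real.sqrt_pos.mpr hTpos
  have hT' : (T:ℝ) = s * s := (Real.mul_self_sqrt hTpos.le).symm
  have hαpos : 0 < α := by rw [hα]; positivity
  set a : ℕ → ℝ := fun t => ‖θ t - θstar‖^2 with ha
  set e : ℕ → ℝ := fun t => ‖g t - gradient f (θ t)‖ with he
  -- per-step inequality
  have hstep : ∀ t < T, f (θ t) - f θstar ≤
      (a t - a (t+1)) / (2*α) + α * σ^2 / 2 + d * e t := by
    intro t ht
    have h1 : f (θ t) - f θstar ≤ ⟪gradient f (θ t), θ t - θstar⟫ := by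
      have := grad_convex_ineq f hconv hdiff (θ t) θstar
      have h2 : ⟪gradient f (θ t), θ t - θstar⟫ = -⟪gradient f (θ t), θstar - θ t⟫ := by
        rw [← inner_neg_right, neg_sub]
      linarith [this, h2.le, h2.ge]
    have h2 : ⟪gradient f (θ t), θ t - θstar⟫
        = ⟪g t, θ t - θstar⟫ + ⟪gradient f (θ t) - g t, θ t - θstar⟫ := by
      rw [inner_sub_left]; ring
    have h3 : ⟪gradient f (θ t) - g t, θ t - θstar⟫ ≤ e t * d := by
      calc ⟪gradient f (θ t) - g t, θ t - θstar⟫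
          ≤ ‖gradient f (θ t) - g t‖ * ‖θ t - θstar‖ := real_inner_le_norm _ _
        _ ≤ e t * d := by
            rw [norm_sub_rev]
            exact mul_le_mul_of_nonneg_left (hbound t ht) (norm_nonneg _)
    have h4 : a (t+1) = a t - 2*α*⟪g t, θ t - θstar⟫ + α^2 * ‖g t‖^2 := by
      have : θ (t+1) - θstar = (θ t - θstar) - α • g t := by
        rw [hrec t]; abel
      simp only [ha, this]
      rw [@norm_sub_sq_real]
      rw [real_inner_smul_right, norm_smul]
      rw [real_inner_comm]
      rw [mul_pow]
      simp [abs_of_pos hαpos]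
      ring
    have h5 : ⟪g t, θ t - θstar⟫ = (a t - a (t+1)) / (2*α) + α * ‖g t‖^2 / 2 := by
      field_simp
      linarith [h4]
    have h6 : ‖g t‖^2 ≤ σ^2 := by
      have := hg t
      nlinarith [norm_nonneg (g t)]
    have h7 : α * ‖g t‖^2 / 2 ≤ α * σ^2 / 2 := by nlinarith
    nlinarith [h1, h2, h3, h5]
  -- sum inequality
  have hsum : ∑ t ∈ Finset.range T, (f (θ t) - f θstar)
      ≤ d * σ * s + d * ∑ t ∈ Finset.range T, e t := by
    have hsum1 : ∑ t ∈ Finset.range T, (f (θ t) - f θstar)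
        ≤ ∑ t ∈ Finset.range T, ((a t - a (t+1)) / (2*α) + α * σ^2 / 2 + d * e t) :=
      Finset.sum_le_sum fun t ht => hstep t (Finset.mem_range.mp ht)
    have htel : ∑ t ∈ Finset.range T, ((a t - a (t+1)) / (2*α))
        = (a 0 - a T) / (2*α) := by
      rw [← Finset.sum_div, Finset.sum_range_sub' a]
    have ha0 : a 0 ≤ d^2 := by
      have := hbound 0 (by omega)
      simp only [ha]
      nlinarith [norm_nonneg (θ 0 - θstar)]
    have haT : 0 ≤ a T := sq_nonneg _
    have hsum2 : ∑ t ∈ Finset.range T, ((a t - a (t+1)) / (2*α) + α * σ^2 / 2 + d * e t)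
        = (a 0 - a T) / (2*α) + T * (α * σ^2 / 2) + d * ∑ t ∈ Finset.range T, e t := by
      rw [Finset.sum_add_distrib, Finset.sum_add_distrib, htel, Finset.sum_const,
        Finset.card_range, Finset.mul_sum]
      ring
    have harith : d^2 / (2*α) + T * (α * σ^2 / 2) = d * σ * s := by
      rw [hα, hT']
      field_simp
      ring
    have : (a 0 - a T) / (2*α) ≤ d^2 / (2*α) := by
      apply div_le_div_of_nonneg_right _ (by positivity)
      · linarith
    linarith [hsum1, hsum2 ▸ hsum1]
  -- min ≤ average
  set m := (Finset.range T).inf' (Finset.nonempty_range_iff.mpr (by omega))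
      (fun t => f (θ t) - f θstar) with hm
  have hmin : (T:ℝ) * m ≤ ∑ t ∈ Finset.range T, (f (θ t) - f θstar) := by
    have := Finset.card_nsmul_le_sum (Finset.range T)
      (fun t => f (θ t) - f θstar) m
      (fun x hx => Finset.inf'_le _ hx)
    simpa [Finset.card_range, nsmul_eq_mul] using this
  have key : (T:ℝ) * m ≤ (T:ℝ) * (d * σ / s + (d / T) * ∑ t ∈ Finset.range T, e t) := by
    have : (T:ℝ) * (d * σ / s + (d / T) * ∑ t ∈ Finset.range T, e t)
        = d * σ * s + d * ∑ t ∈ Finset.range T, e t := by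
      rw [hT']
      field_simp
    rw [this]
    linarith [hmin, hsum]
  exact le_of_mul_le_mul_left (by simpa using key) hTpos
end

section
/- Let V be a real inner product space, f : V → ℝ convex and differentiable, θ* ∈ V, g : ℕ → V with ‖g(t)‖ ≤ σ for all t, and θ(t+1) = θ(t) - α • g(t) with α > 0. If ‖θ(t) - θ*‖ ≤ d for all t ∈ {0,…,T-1}, then (1/T) ∑_{t=0}^{T-1} (f(θ(t)) - f(θ*)) ≤ d²/(2αT) + ασ²/2 + (d/T) ∑_{t=0}^{T-1} ‖g(t) - ∇f(θ(t))‖. -/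
/-!
Convexity gives `f θₜ - f θ* ≤ ⟪∇f θₜ, θₜ - θ*⟫`. Writing `∇f θₜ = gₜ + (∇f θₜ - gₜ)`, the
expansion of `‖θₜ₊₁ - θ*‖² = ‖θₜ - θ* - α gₜ‖²` identifies `⟪gₜ, θₜ - θ*⟫` with
`(‖θₜ - θ*‖² - ‖θₜ₊₁ - θ*‖²) / (2α) + α‖gₜ‖²/2`, which telescopes over `t < T`, while
Cauchy–Schwarz bounds the error term by `d ‖gₜ - ∇f θₜ‖`.
-/

open RealInnerProductSpace

theorem ConvexOn.add_fderiv_sub_le {E : Type*} [NormedAddCommGroup E] [NormedSpace ℝ E]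
    {s : Set E} {f : E → ℝ} {f' : E →L[ℝ] ℝ} {x y : E} (hf : ConvexOn ℝ s f)
    (hx : x ∈ s) (hy : y ∈ s) (hf' : HasFDerivAt f f' x) : f x + f' (y - x) ≤ f y := by
  let L := AffineMap.lineMap (k := ℝ) x y
  have hconv : ConvexOn ℝ (L ⁻¹' s) (f ∘ L) := hf.comp_affineMap L
  have hderiv : HasDerivAt (f ∘ L) (f' (y - x)) 0 := by
    have hL : HasDerivAt L (y - x) 0 := AffineMap.hasDerivAt_lineMap
    exact (by simpa [L] using hf' : HasFDerivAt f f' (L 0)).comp_hasDerivAt 0 hL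
  have hslope := hconv.le_slope_of_hasDerivAt (by simpa [L] using hx) (by simpa [L] using hy)
    zero_lt_one hderiv
  simp only [slope, Function.comp_apply, AffineMap.lineMap_apply_one,
    AffineMap.lineMap_apply_zero, vsub_eq_sub, sub_zero, inv_one, smul_eq_mul, one_mul, L] at hslope
  linarith

theorem ConvexOn.add_inner_gradient_sub_le {V : Type*} [NormedAddCommGroup V]
    [InnerProductSpace ℝ V] [CompleteSpace V] {s : Set V} {f : V → ℝ} {x y : V}
    (hf : ConvexOn ℝ s f) (hx : x ∈ s) (hy : y ∈ s) (hfx : DifferentiableAt ℝ f x) :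
    f x + ⟪gradient f x, y - x⟫ ≤ f y := by
  simpa using hf.add_fderiv_sub_le hx hy (hasGradientAt_iff_hasFDerivAt.mp hfx.hasGradientAt)

theorem norm_sub_smul_sq_eq {V : Type*} [NormedAddCommGroup V] [InnerProductSpace ℝ V]
    (r v : V) (α : ℝ) : ‖r - α • v‖ ^ 2 = ‖r‖ ^ 2 - 2 * α * ⟪v, r⟫ + α ^ 2 * ‖v‖ ^ 2 := by
  rw [norm_sub_sq_real, real_inner_smul_right, norm_smul, mul_pow, Real.norm_eq_abs, sq_abs,
    real_inner_comm]
  ring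

section GradientDescent

variable {V : Type*} [NormedAddCommGroup V] [InnerProductSpace ℝ V] [CompleteSpace V]
  {s : Set V} {f : V → ℝ}

theorem ConvexOn.sub_le_of_gradient_step (hf : ConvexOn ℝ s f) {x y : V} (hx : x ∈ s)
    (hy : y ∈ s) (hfx : DifferentiableAt ℝ f x) (v : V) {α : ℝ} (hα : α ≠ 0) :
    f x - f y ≤ (‖x - y‖ ^ 2 - ‖x - α • v - y‖ ^ 2) / (2 * α) + α * ‖v‖ ^ 2 / 2 +
      ‖v - gradient f x‖ * ‖x - y‖ := by
  have hfirst := hf.add_inner_gradient_sub_le hx hy hfx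
  have hsplit : ⟪gradient f x, y - x⟫ = -(⟪v, x - y⟫ + ⟪gradient f x - v, x - y⟫) := by
    rw [inner_sub_left, ← neg_sub x y, inner_neg_right]
    ring
  have hdescent : (‖x - y‖ ^ 2 - ‖x - α • v - y‖ ^ 2) / (2 * α) + α * ‖v‖ ^ 2 / 2 =
      ⟪v, x - y⟫ := by
    rw [sub_right_comm, norm_sub_smul_sq_eq]
    field_simp
    ring
  have herror : ⟪gradient f x - v, x - y⟫ ≤ ‖v - gradient f x‖ * ‖x - y‖ :=
    norm_sub_rev v _ ▸ real_inner_le_norm _ _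
  linarith

theorem ConvexOn.sum_sub_le_of_gradient_descent (hf : ConvexOn ℝ s f) {θ g : ℕ → V}
    {θstar : V} {α : ℝ} {T : ℕ} (hα : α ≠ 0) (hrec : ∀ t, θ (t + 1) = θ t - α • g t)
    (hθ : ∀ t < T, θ t ∈ s) (hstar : θstar ∈ s) (hdiff : ∀ t < T, DifferentiableAt ℝ f (θ t)) :
    ∑ t ∈ Finset.range T, (f (θ t) - f θstar) ≤
      (‖θ 0 - θstar‖ ^ 2 - ‖θ T - θstar‖ ^ 2) / (2 * α) +
        ∑ t ∈ Finset.range T,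
          (α * ‖g t‖ ^ 2 / 2 + ‖g t - gradient f (θ t)‖ * ‖θ t - θstar‖) := by
  calc ∑ t ∈ Finset.range T, (f (θ t) - f θstar)
      ≤ ∑ t ∈ Finset.range T, ((‖θ t - θstar‖ ^ 2 - ‖θ (t + 1) - θstar‖ ^ 2) / (2 * α) +
          (α * ‖g t‖ ^ 2 / 2 + ‖g t - gradient f (θ t)‖ * ‖θ t - θstar‖)) := by
        refine Finset.sum_le_sum fun t ht => ?_
        rw [Finset.mem_range] at ht
        rw [hrec, ← add_assoc]
        exact hf.sub_le_of_gradient_step (hθ t ht) hstar (hdiff t ht) (g t) hα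
    _ = _ := by
        rw [Finset.sum_add_distrib, ← Finset.sum_div,
          Finset.sum_range_sub' (fun t => ‖θ t - θstar‖ ^ 2)]

end GradientDescent

theorem stmt9_general {V : Type*} [NormedAddCommGroup V] [InnerProductSpace ℝ V] [CompleteSpace V]
    (f : V → ℝ) (hconv : ConvexOn ℝ Set.univ f) (hdiff : Differentiable ℝ f)
    (θstar : V) (θ g : ℕ → V) (σ d α : ℝ) (T : ℕ)
    (hT : 1 ≤ T) (hα : 0 < α)
    (hg : ∀ t, ‖g t‖ ≤ σ)
    (hrec : ∀ t, θ (t + 1) = θ t - α • g t)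
    (hbound : ∀ t < T, ‖θ t - θstar‖ ≤ d) :
    (1 / (T : ℝ)) * ∑ t ∈ Finset.range T, (f (θ t) - f θstar) ≤
      d ^ 2 / (2 * α * T) + α * σ ^ 2 / 2 +
        (d / T) * ∑ t ∈ Finset.range T, ‖g t - gradient f (θ t)‖ := by
  have hsum := hconv.sum_sub_le_of_gradient_descent (T := T) hα.ne' hrec
    (fun _ _ => Set.mem_univ _) (Set.mem_univ θstar) (fun t _ => hdiff (θ t))
  have hstart : ‖θ 0 - θstar‖ ^ 2 - ‖θ T - θstar‖ ^ 2 ≤ d ^ 2 := by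
    have := pow_le_pow_left₀ (norm_nonneg _) (hbound 0 hT) 2
    linarith [sq_nonneg ‖θ T - θstar‖]
  have hterms : ∑ t ∈ Finset.range T,
      (α * ‖g t‖ ^ 2 / 2 + ‖g t - gradient f (θ t)‖ * ‖θ t - θstar‖) ≤
        T * (α * σ ^ 2 / 2) + d * ∑ t ∈ Finset.range T, ‖g t - gradient f (θ t)‖ := by
    calc _ ≤ ∑ t ∈ Finset.range T, (α * σ ^ 2 / 2 + d * ‖g t - gradient f (θ t)‖) := by
          refine Finset.sum_le_sum fun t ht => ?_
          have hgt := pow_le_pow_left₀ (norm_nonneg _) (hg t) 2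
          have hθt := mul_le_mul_of_nonneg_left (hbound t (Finset.mem_range.mp ht))
            (norm_nonneg (g t - gradient f (θ t)))
          nlinarith
      _ = _ := by
          rw [Finset.sum_add_distrib, Finset.sum_const, Finset.card_range, nsmul_eq_mul,
            Finset.mul_sum]
  have hT0 : (0 : ℝ) < T := by exact_mod_cast hT
  calc (1 / (T : ℝ)) * ∑ t ∈ Finset.range T, (f (θ t) - f θstar)
      ≤ (1 / T) * (d ^ 2 / (2 * α) + T * (α * σ ^ 2 / 2) +
          d * ∑ t ∈ Finset.range T, ‖g t - gradient f (θ t)‖) := by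
        gcongr
        linarith [div_le_div_of_nonneg_right hstart (by positivity : (0 : ℝ) ≤ 2 * α)]
    _ = _ := by field_simp

theorem stmt9 {V : Type*} [NormedAddCommGroup V] [InnerProductSpace ℝ V] [CompleteSpace V]
    (f : V → ℝ) (hconv : ConvexOn ℝ Set.univ f) (hdiff : Differentiable ℝ f)
    (θstar : V) (θ g : ℕ → V) (σ d α : ℝ) (T : ℕ)
    (hσ : 0 < σ) (hd : 0 < d) (hT : 1 ≤ T) (hα : 0 < α)
    (hg : ∀ t, ‖g t‖ ≤ σ)
    (hrec : ∀ t, θ (t + 1) = θ t - α • g t)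
    (hbound : ∀ t < T, ‖θ t - θstar‖ ≤ d) :
    (1 / (T : ℝ)) * ∑ t ∈ Finset.range T, (f (θ t) - f θstar) ≤
      d ^ 2 / (2 * α * T) + α * σ ^ 2 / 2 +
        (d / T) * ∑ t ∈ Finset.range T, ‖g t - gradient f (θ t)‖ :=
  stmt9_general f hconv hdiff θstar θ g σ d α T hT hα hg hrec hbound
end
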